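/- Let k be an algebraically closed field of characteristic zero, complete with respect to a non-Archimedean multiplicative norm ‖·‖, and let p be a prime with ‖(p : k)‖ < 1. Let f, g ∈ k[X] be coprime with d = max(natDegree f, natDegree g), p ≤ d, and f.eval 0 = 0. Assume g.eval x ≠ 0 and (derivative f · g − f · derivative g).eval x ≠ 0 for every x ∈ k with ‖x‖ < 1. Then f has exactly one root in the open disk of radius ‖(p : k)‖^(1/(p−1)): there exists a unique x ∈ k with ‖x‖ < ‖(p : k)‖^((1 : ℝ)/(p−1)) and f.eval x = 0 (namely x = 0). -/

import Mathlib

/-!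
Expand `φ = f / g` as a power series `∑ aₙ Xⁿ`. A polynomial without zeros in the open unit disk
has all its coefficients bounded by its constant coefficient, and this property is stable under
products and inverses; applied to `φ' = (f' g - f g') / g²` it gives `‖n aₙ‖ ≤ ‖a₁‖`. Since
`‖n‖ ≥ ‖p‖ ^ ((n - 1) / (p - 1))`, for `0 < ‖x‖ < ‖p‖ ^ (1 / (p - 1))` the term `a₁ x` strictly
dominates every other `aₙ xⁿ`: this is the slope bound on the first face of the Newton polygon.
Multiplying back by `g`, whose coefficients are bounded by `g(0)`, the single term `a₁ g(0) x`
strictly dominates all other contributions to `f(x)`, so `f(x) ≠ 0`.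
-/

open Polynomial
open scoped PowerSeries

section Ultrametric

variable {ι M : Type*} [SeminormedAddCommGroup M] [IsUltrametricDist M] {s : Finset ι}
  {F : ι → M}

theorem IsUltrametricDist.norm_sum_lt_of_forall_lt {C : ℝ} (hC : 0 < C)
    (h : ∀ i ∈ s, ‖F i‖ < C) : ‖∑ i ∈ s, F i‖ < C := by
  rcases s.eq_empty_or_nonempty with rfl | hs
  · simpa using hC
  · exact (hs.norm_sum_le_sup'_norm F).trans_lt ((Finset.sup'_lt_iff hs).mpr h)

theorem IsUltrametricDist.sum_ne_zero_of_norm_lt {i₀ : ι} (hi₀ : i₀ ∈ s) (hF : 0 < ‖F i₀‖)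
    (h : ∀ i ∈ s, i ≠ i₀ → ‖F i‖ < ‖F i₀‖) : ∑ i ∈ s, F i ≠ 0 := by
  classical
  rw [← Finset.add_sum_erase s F hi₀]
  intro hsum
  have hrest := norm_sum_lt_of_forall_lt hF fun i hi =>
    h i (Finset.mem_of_mem_erase hi) (Finset.ne_of_mem_erase hi)
  rw [← neg_eq_of_add_eq_zero_right hsum, norm_neg] at hrest
  exact lt_irrefl _ hrest

end Ultrametric

section NatCast

variable {k : Type*} [NormedField k] [IsUltrametricDist k] {p : ℕ}

theorem norm_natCast_eq_one_of_not_dvd (hp : p.Prime) (hpk : ‖(p : k)‖ < 1) {m : ℕ}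
    (hm : ¬p ∣ m) : ‖(m : k)‖ = 1 := by
  obtain ⟨u, v, huv⟩ := Nat.isCoprime_iff_coprime.mpr ((hp.coprime_iff_not_dvd).mpr hm)
  have h1 : (u : k) * p + v * m = 1 := by exact_mod_cast congrArg (Int.cast : ℤ → k) huv
  refine (IsUltrametricDist.norm_natCast_le_one k m).antisymm (not_lt.mp fun hlt => ?_)
  have hsmall (z : ℤ) (y : k) (hy : ‖y‖ < 1) : ‖(z : k) * y‖ < 1 := by
    rw [norm_mul]
    exact (mul_le_of_le_one_left (norm_nonneg y)
      (IsUltrametricDist.norm_intCast_le_one k z)).trans_lt hy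
  have := (IsUltrametricDist.norm_add_le_max ((u : k) * p) ((v : k) * m)).trans_lt
    (max_lt (hsmall u _ hpk) (hsmall v _ hlt))
  rw [h1, norm_one] at this
  exact lt_irrefl _ this

theorem norm_natCast_eq_pow_factorization (hp : p.Prime) (hpk : ‖(p : k)‖ < 1) {n : ℕ}
    (hn : n ≠ 0) : ‖(n : k)‖ = ‖(p : k)‖ ^ n.factorization p := by
  conv_lhs => rw [← Nat.ordProj_mul_ordCompl_eq_self n p]
  push_cast
  rw [norm_mul, norm_pow, norm_natCast_eq_one_of_not_dvd hp hpk (Nat.not_dvd_ordCompl hp hn),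
    mul_one]

theorem Nat.sub_one_mul_factorization_lt (hp : p ≠ 0) {n : ℕ} (hn : n ≠ 0) :
    (p - 1) * n.factorization p < n :=
  calc (p - 1) * n.factorization p < 1 + n.factorization p * (p - 1) := by lia
    _ ≤ (1 + (p - 1)) ^ n.factorization p := one_add_le_pow_of_two_add_nonneg (by positivity) _
    _ = p ^ n.factorization p := by rw [Nat.add_sub_cancel' (by omega)]
    _ ≤ n := Nat.ordProj_le p hn

theorem pow_le_norm_natCast_succ (hp : p.Prime) (hpk : ‖(p : k)‖ < 1) {r : ℝ} (hr0 : 0 ≤ r)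
    (hr1 : r ≤ 1) (hrp : r ^ (p - 1) ≤ ‖(p : k)‖) (n : ℕ) : r ^ n ≤ ‖((n + 1 : ℕ) : k)‖ := by
  have hval := Nat.sub_one_mul_factorization_lt hp.ne_zero n.add_one_ne_zero
  calc r ^ n ≤ r ^ ((p - 1) * (n + 1).factorization p) := pow_le_pow_of_le_one hr0 hr1 (by omega)
    _ = (r ^ (p - 1)) ^ (n + 1).factorization p := pow_mul r _ _
    _ ≤ ‖(p : k)‖ ^ (n + 1).factorization p := pow_le_pow_left₀ (by positivity) hrp _
    _ = ‖((n + 1 : ℕ) : k)‖ := (norm_natCast_eq_pow_factorization hp hpk n.add_one_ne_zero).symm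

end NatCast

def PowerSeries.IsConstantCoeffDominant {k : Type*} [NormedField k] (A : k⟦X⟧) : Prop :=
  ∀ n, ‖coeff n A‖ ≤ ‖constantCoeff A‖

namespace PowerSeries.IsConstantCoeffDominant

variable {k : Type*} [NormedField k] [IsUltrametricDist k] {A B : k⟦X⟧}

theorem mul (hA : A.IsConstantCoeffDominant) (hB : B.IsConstantCoeffDominant) :
    (A * B).IsConstantCoeffDominant := by
  intro n
  rw [coeff_mul, map_mul, norm_mul]
  refine IsUltrametricDist.norm_sum_le_of_forall_le_of_nonneg (by positivity) fun ij _ => ?_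
  rw [norm_mul]
  exact mul_le_mul (hA _) (hB _) (norm_nonneg _) (norm_nonneg _)

theorem inv (hA : A.IsConstantCoeffDominant) : A⁻¹.IsConstantCoeffDominant := by
  intro n
  rw [constantCoeff_inv, norm_inv]
  induction n using Nat.strong_induction_on with
  | _ n ih =>
    rcases Nat.eq_zero_or_pos n with rfl | hn
    · rw [coeff_zero_eq_constantCoeff_apply, constantCoeff_inv, norm_inv]
    rw [coeff_inv, if_neg hn.ne', norm_mul, norm_neg, norm_inv]
    refine (mul_le_mul_of_nonneg_left (IsUltrametricDist.norm_sum_le_of_forall_le_of_nonneg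
      (C := ‖constantCoeff A‖ * ‖constantCoeff A‖⁻¹) (by positivity) fun ij _ => ?_)
      (by positivity)).trans_eq ?_
    · split_ifs with hij
      · rw [norm_mul]
        exact mul_le_mul (hA _) (ih _ hij) (norm_nonneg _) (norm_nonneg _)
      · rw [norm_zero]; positivity
    · simpa [mul_assoc] using mul_inv_mul_cancel ‖constantCoeff A‖⁻¹

end PowerSeries.IsConstantCoeffDominant

theorem Polynomial.isConstantCoeffDominant_coe {k : Type*} [NormedField k] [IsUltrametricDist k]
    [IsAlgClosed k] {P : k[X]} (hP : ∀ z : k, ‖z‖ < 1 → P.eval z ≠ 0) :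
    (P : k⟦X⟧).IsConstantCoeffDominant := by
  have hC (a : k) : (C a : k⟦X⟧).IsConstantCoeffDominant := fun n => by
    rcases n with _ | n <;> simp
  have hlinear : ∀ Q ∈ P.roots.map (fun α => ((X - C α : k[X]) : k⟦X⟧)),
      Q.IsConstantCoeffDominant := by
    simp only [Multiset.mem_map]
    rintro _ ⟨α, hα, rfl⟩ n
    have h1 : 1 ≤ ‖α‖ := not_lt.mp fun h => hP α h (isRoot_of_mem_roots hα)
    rcases n with _ | _ | n <;> simp [PowerSeries.coeff_X, h1]
  rw [← C_leadingCoeff_mul_prod_multiset_X_sub_C (p := P) IsAlgClosed.card_roots_eq_natDegree,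
    Polynomial.coe_mul, ← Polynomial.coeToPowerSeries.ringHom_apply (φ := Multiset.prod _),
    map_multiset_prod, Multiset.map_map]
  exact (hC _).mul (Multiset.prod_induction _ _ (fun _ _ => .mul) (by simpa using hC 1) hlinear)

theorem PowerSeries.constantCoeff_derivative {R : Type*} [CommSemiring R] (φ : R⟦X⟧) :
    constantCoeff (d⁄dX R φ) = coeff 1 φ := by
  simp [← coeff_zero_eq_constantCoeff_apply, coeff_derivative]

theorem PowerSeries.derivative_mul_inv {R : Type*} [Field R] (F G : R⟦X⟧)
    (hG : constantCoeff G ≠ 0) :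
    d⁄dX R (F * G⁻¹) = (d⁄dX R F * G - F * d⁄dX R G) * G⁻¹ ^ 2 := by
  rw [Derivation.leibniz, derivative_inv', smul_eq_mul, smul_eq_mul]
  linear_combination (-(G⁻¹ * d⁄dX R F)) * PowerSeries.mul_inv_cancel G hG

namespace PowerSeries

variable {k : Type*} [NormedField k] {φ G : k⟦X⟧} {x : k}

theorem norm_coeff_mul_pow_lt (hφ : (d⁄dX k φ).IsConstantCoeffDominant) (hφ1 : coeff 1 φ ≠ 0)
    (hx0 : x ≠ 0) {n : ℕ} (hxn : ‖x‖ ^ n < ‖((n + 1 : ℕ) : k)‖) :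
    ‖coeff (n + 1) φ * x ^ (n + 1)‖ < ‖coeff 1 φ * x‖ := by
  have hslope : ‖coeff (n + 1) φ‖ * ‖((n + 1 : ℕ) : k)‖ ≤ ‖coeff 1 φ‖ := by
    simpa [constantCoeff_derivative, coeff_derivative] using hφ n
  rcases eq_or_ne (coeff (n + 1) φ) 0 with h | h
  · rw [h, zero_mul, norm_zero]
    exact norm_pos_iff.mpr (mul_ne_zero hφ1 hx0)
  calc ‖coeff (n + 1) φ * x ^ (n + 1)‖ = ‖coeff (n + 1) φ‖ * ‖x‖ ^ n * ‖x‖ := by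
        rw [norm_mul, norm_pow, pow_succ, mul_assoc]
    _ < ‖coeff (n + 1) φ‖ * ‖((n + 1 : ℕ) : k)‖ * ‖x‖ := by gcongr
    _ ≤ ‖coeff 1 φ * x‖ := by rw [norm_mul]; gcongr

theorem norm_coeff_mul_coeff_mul_pow_lt (hφ0 : constantCoeff φ = 0)
    (hφ : (d⁄dX k φ).IsConstantCoeffDominant) (hG : G.IsConstantCoeffDominant)
    (hφ1 : coeff 1 φ ≠ 0) (hG0 : constantCoeff G ≠ 0) (hx0 : x ≠ 0) (hx1 : ‖x‖ < 1)
    (hx : ∀ n ≠ 0, ‖x‖ ^ n < ‖((n + 1 : ℕ) : k)‖) {ij : ℕ × ℕ} (hij : ij ≠ (1, 0)) :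
    ‖coeff ij.1 φ * coeff ij.2 G * x ^ (ij.1 + ij.2)‖ < ‖coeff 1 φ * constantCoeff G * x‖ := by
  obtain ⟨i, j⟩ := ij
  have hG0' : 0 < ‖constantCoeff G‖ := norm_pos_iff.mpr hG0
  have hGj : ‖coeff j G * x ^ j‖ ≤ ‖constantCoeff G‖ * ‖x‖ ^ j := by
    rw [norm_mul, norm_pow]; gcongr; exact hG j
  rw [show coeff i φ * coeff j G * x ^ (i + j) = coeff i φ * x ^ i * (coeff j G * x ^ j) by ring,
    norm_mul, mul_right_comm (coeff 1 φ), norm_mul (coeff 1 φ * x)]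
  have hφx : 0 < ‖coeff 1 φ * x‖ := norm_pos_iff.mpr (mul_ne_zero hφ1 hx0)
  match i, hij with
  | 0, _ =>
    rw [coeff_zero_eq_constantCoeff_apply, hφ0, zero_mul, norm_zero, zero_mul]
    exact mul_pos hφx hG0'
  | 1, hij =>
    have hj : j ≠ 0 := by rintro rfl; exact hij rfl
    rw [pow_one]
    refine mul_lt_mul_of_pos_left (hGj.trans_lt ?_) hφx
    exact mul_lt_of_lt_one_right hG0' (pow_lt_one₀ (norm_nonneg x) hx1 hj)
  | n + 2, _ =>
    have hGj' : ‖coeff j G * x ^ j‖ ≤ ‖constantCoeff G‖ :=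
      hGj.trans (mul_le_of_le_one_right hG0'.le (pow_le_one₀ (norm_nonneg x) hx1.le))
    calc ‖coeff (n + 2) φ * x ^ (n + 2)‖ * ‖coeff j G * x ^ j‖
        ≤ ‖coeff (n + 2) φ * x ^ (n + 2)‖ * ‖constantCoeff G‖ := by gcongr
      _ < ‖coeff 1 φ * x‖ * ‖constantCoeff G‖ :=
        mul_lt_mul_of_pos_right (norm_coeff_mul_pow_lt hφ hφ1 hx0 (hx _ n.succ_ne_zero)) hG0'

end PowerSeries

open Finset in
theorem Polynomial.eval_ne_zero_of_coe_eq_mul {k : Type*} [NormedField k] [IsUltrametricDist k]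
    {f : k[X]} {φ G : k⟦X⟧} (hf : (f : k⟦X⟧) = φ * G) (hφ0 : PowerSeries.constantCoeff φ = 0)
    (hφ : (d⁄dX k φ).IsConstantCoeffDominant) (hG : G.IsConstantCoeffDominant)
    (hφ1 : PowerSeries.coeff 1 φ ≠ 0) (hG0 : PowerSeries.constantCoeff G ≠ 0) {x : k}
    (hx0 : x ≠ 0) (hx1 : ‖x‖ < 1) (hx : ∀ n ≠ 0, ‖x‖ ^ n < ‖((n + 1 : ℕ) : k)‖) :
    f.eval x ≠ 0 := by
  have hterm (n : ℕ) : f.coeff n * x ^ n = ∑ ij ∈ antidiagonal n,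
      PowerSeries.coeff ij.1 φ * PowerSeries.coeff ij.2 G * x ^ (ij.1 + ij.2) := by
    rw [← Polynomial.coeff_coe, hf, PowerSeries.coeff_mul, Finset.sum_mul]
    exact Finset.sum_congr rfl fun ij hij => by rw [HasAntidiagonal.mem_antidiagonal.mp hij]
  have hlinear :
      f.coeff 1 * x ^ 1 = PowerSeries.coeff 1 φ * PowerSeries.constantCoeff G * x := by
    rw [← Polynomial.coeff_coe, hf]
    simp [PowerSeries.coeff_mul, Finset.Nat.sum_antidiagonal_succ, hφ0]
  have hpos : 0 < ‖PowerSeries.coeff 1 φ * PowerSeries.constantCoeff G * x‖ :=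
    norm_pos_iff.mpr (mul_ne_zero (mul_ne_zero hφ1 hG0) hx0)
  rw [eval_eq_sum_range' (Nat.lt_add_of_pos_right two_pos)]
  refine IsUltrametricDist.sum_ne_zero_of_norm_lt (i₀ := 1) (mem_range.mpr (by omega))
    (hlinear ▸ hpos) fun n _ hn => ?_
  rw [hterm, hlinear]
  refine IsUltrametricDist.norm_sum_lt_of_forall_lt hpos fun ij hij => ?_
  refine PowerSeries.norm_coeff_mul_coeff_mul_pow_lt hφ0 hφ hG hφ1 hG0 hx0 hx1 hx fun h => hn ?_
  rw [← HasAntidiagonal.mem_antidiagonal.mp hij, h]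
  rfl

theorem Polynomial.eval_ne_zero_of_norm_pow_lt_norm_natCast {k : Type*} [NormedField k]
    [IsUltrametricDist k] [IsAlgClosed k] {f g : k[X]} (h0 : f.eval 0 = 0)
    (hpole : ∀ z : k, ‖z‖ < 1 → g.eval z ≠ 0)
    (hcrit : ∀ z : k, ‖z‖ < 1 → (derivative f * g - f * derivative g).eval z ≠ 0) {x : k}
    (hx0 : x ≠ 0) (hx1 : ‖x‖ < 1) (hx : ∀ n ≠ 0, ‖x‖ ^ n < ‖((n + 1 : ℕ) : k)‖) :
    f.eval x ≠ 0 := by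
  set G : k⟦X⟧ := ↑g
  set W : k⟦X⟧ := ↑(derivative f * g - f * derivative g)
  set φ : k⟦X⟧ := ↑f * G⁻¹
  have hG0 : PowerSeries.constantCoeff G ≠ 0 := by
    simpa [G, coeff_zero_eq_eval_zero] using hpole 0 (by simp)
  have hW0 : PowerSeries.constantCoeff W ≠ 0 := by
    simpa only [W, constantCoeff_coe, coeff_zero_eq_eval_zero] using hcrit 0 (by simp)
  have hG := isConstantCoeffDominant_coe hpole
  have hdφ : d⁄dX k φ = W * G⁻¹ * G⁻¹ := by
    rw [PowerSeries.derivative_mul_inv _ _ hG0]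
    simp only [G, W, PowerSeries.derivative_coe, coe_sub, coe_mul]
    ring
  have hφ1 : PowerSeries.coeff 1 φ ≠ 0 := by
    rw [← PowerSeries.constantCoeff_derivative, hdφ, map_mul, map_mul,
      PowerSeries.constantCoeff_inv]
    exact mul_ne_zero (mul_ne_zero hW0 (inv_ne_zero hG0)) (inv_ne_zero hG0)
  refine eval_ne_zero_of_coe_eq_mul ?_ (by simp [φ, coeff_zero_eq_eval_zero, h0])
    (hdφ ▸ ((isConstantCoeffDominant_coe hcrit).mul hG.inv).mul hG.inv) hG hφ1 hG0 hx0 hx1 hx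
  rw [mul_assoc, PowerSeries.inv_mul_cancel _ hG0, mul_one]

theorem stmt5_general {k : Type*} [NormedField k] [IsAlgClosed k] [CharZero k]
    [IsUltrametricDist k]
    (p : ℕ) (hp : p.Prime) (hpk : ‖(p : k)‖ < 1)
    (f g : Polynomial k)
    (h0 : f.eval 0 = 0)
    (hpole : ∀ x : k, ‖x‖ < 1 → g.eval x ≠ 0)
    (hcrit : ∀ x : k, ‖x‖ < 1 → (derivative f * g - f * derivative g).eval x ≠ 0) :
    ∃! x : k, ‖x‖ < ‖(p : k)‖ ^ ((1 : ℝ) / ((p : ℝ) - 1)) ∧ f.eval x = 0 := by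
  have hp1 : p - 1 ≠ 0 := Nat.sub_ne_zero_of_lt hp.one_lt
  have hr0 : 0 < ‖(p : k)‖ ^ ((1 : ℝ) / ((p : ℝ) - 1)) :=
    Real.rpow_pos_of_pos (norm_pos_iff.mpr (Nat.cast_ne_zero.mpr hp.ne_zero)) _
  have hrp : (‖(p : k)‖ ^ ((1 : ℝ) / ((p : ℝ) - 1))) ^ (p - 1) = ‖(p : k)‖ := by
    rw [← Nat.cast_pred hp.pos, one_div, Real.rpow_inv_natCast_pow (norm_nonneg _) hp1]
  generalize ‖(p : k)‖ ^ ((1 : ℝ) / ((p : ℝ) - 1)) = r at hr0 hrp ⊢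
  have hr1 : r < 1 := by rwa [← pow_lt_one_iff_of_nonneg hr0.le hp1, hrp]
  refine ⟨0, ⟨by simpa using hr0, h0⟩, fun x ⟨hxr, hfx⟩ => by_contra fun hx0 => ?_⟩
  refine eval_ne_zero_of_norm_pow_lt_norm_natCast h0 hpole hcrit hx0 (hxr.trans hr1)
    (fun n hn => ?_) hfx
  exact (pow_lt_pow_left₀ hxr (norm_nonneg x) hn).trans_le
    (pow_le_norm_natCast_succ hp hpk hr0.le hr1.le hrp.le n)

/-- If `φ = f/g` has no pole and no critical point in the open unit disk and
`φ(0) = 0`, then `φ` has exactly one zero in the open disk of radius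
`‖p‖^(1/(p−1))` (namely `0`). -/
theorem stmt5 {k : Type*} [NormedField k] [IsAlgClosed k] [CharZero k]
    [CompleteSpace k] [IsUltrametricDist k]
    (p : ℕ) (hp : p.Prime) (hpk : ‖(p : k)‖ < 1)
    (f g : Polynomial k) (hco : IsCoprime f g)
    (hpd : p ≤ max f.natDegree g.natDegree)
    (h0 : f.eval 0 = 0)
    (hpole : ∀ x : k, ‖x‖ < 1 → g.eval x ≠ 0)
    (hcrit : ∀ x : k, ‖x‖ < 1 → (derivative f * g - f * derivative g).eval x ≠ 0) :
    ∃! x : k, ‖x‖ < ‖(p : k)‖ ^ ((1 : ℝ) / ((p : ℝ) - 1)) ∧ f.eval x = 0 :=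
  stmt5_general p hp hpk f g h0 hpole hcrit
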